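/- arXiv:2007.14183 — 4 statements merged into one kernel-verified Lean document; each statement's English description precedes it below -/
import Mathlib

section
/- With y, y', z, u as in the context, the two-element set {y, y'} equals the two-element set { z^{(n+1)/2}·( u/(2D) + A(u)·√R ), z^{(n+1)/2}·( u/(2D) − A(u)·√R ) }, where A(u) denotes the value of the polynomial A at u. -/
/-!
Write `n = 2k + 1`. Then `z = y y'` satisfies `zⁿ = d² - R = D`, so with `√D² = D` the number
`t = y z^k / √D` satisfies `t + t⁻¹ = u / √D` and `t² = y / y'`. The Dickson identity
`F_m(t + t⁻¹) = t^m + t^(-m)` gives `F_{n-1}(u / √D) = (y / y')^k + (y' / y)^k`, whatever the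
choice of `√D`. Multiplying by `z^(k+1)` and using `yⁿ = d + √R`, `y'ⁿ = d - √R` turns the
two summands into `z^(k+1) u / (2D) = (y + y') / 2` and `z^(k+1) A(u) √R = (y' - y) / 2`.
-/

open Polynomial

/-- `F_m(Z) = 2 T_m(Z/2)` over ℂ, where `T_m` is the Chebyshev polynomial of the first kind. -/
noncomputable def Fc (m : ℤ) : ℂ[X] :=
  2 * (Polynomial.Chebyshev.T ℂ m).comp (C (1 / 2 : ℂ) * X)

/-- The polynomial `A = (F_{n-1}(Z/√D) - dZ/D)/(2R)` (with `D = d² - R`), realized over ℂ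
via a choice `sd` of a square root of `D`.  Since `n - 1` is even, it has rational
coefficients. -/
noncomputable def Apoly (n : ℕ) (d R : ℚ) (sd : ℂ) : ℂ[X] :=
  ((Fc ((n : ℤ) - 1)).comp (C sd⁻¹ * X) - C ((d : ℂ) / ((d : ℂ) ^ 2 - (R : ℂ))) * X)
    * C (1 / (2 * (R : ℂ)))

namespace Polynomial.Chebyshev

variable {K : Type*} [Field K]

theorem C_eval_add_inv {t : K} (ht : t ≠ 0) (m : ℕ) :
    (C K m).eval (t + t⁻¹) = t ^ m + t⁻¹ ^ m := by
  rw [← dickson_one_one_eq_chebyshev_C, dickson_one_one_eval_add_inv _ _ (mul_inv_cancel₀ ht)]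

-- With `z = y y'`, the argument is `t + t⁻¹` for `t = y z^k / r`, and `t² = y / y'`.
theorem C_even_eval_of_sq_eq_mul_pow {k : ℕ} {y y' r : K} (hr : r ^ 2 = (y * y') ^ (2 * k + 1))
    (hr0 : r ≠ 0) :
    (C K (2 * k : ℕ)).eval (r⁻¹ * ((y * y') ^ k * (y + y'))) = (y / y') ^ k + (y' / y) ^ k := by
  have hz : y * y' ≠ 0 := fun h => hr0 (by simpa [h] using hr)
  have hy : y ≠ 0 := left_ne_zero_of_mul hz
  have hy' : y' ≠ 0 := right_ne_zero_of_mul hz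
  set t := y * (y * y') ^ k / r with ht
  have ht0 : t ≠ 0 := by positivity
  have ht_inv : t⁻¹ = y' * (y * y') ^ k / r := by
    refine inv_eq_of_mul_eq_one_right ?_
    rw [ht, div_mul_div_comm, div_eq_one_iff_eq (mul_ne_zero hr0 hr0), ← sq, hr]
    ring
  have ht_sq : t ^ 2 = y / y' := by
    rw [ht, div_pow, hr, div_eq_div_iff (by positivity) hy']
    ring
  have harg : r⁻¹ * ((y * y') ^ k * (y + y')) = t + t⁻¹ := by
    rw [ht_inv, ht]
    ring
  rw [harg, C_eval_add_inv ht0, pow_mul, pow_mul, inv_pow, ht_sq, inv_div]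

end Polynomial.Chebyshev

theorem Fc_eq_chebyshev_C (m : ℤ) : Fc m = Chebyshev.C ℂ m := by
  rw [Fc, Chebyshev.C_eq_two_mul_T_comp_half_mul_X, invOf_eq_inv, one_div]

section DeMoivre

variable {K : Type*} [Field K] {k : ℕ} {d s y y' : K}

theorem mul_pow_odd_eq_sq_sub_sq (hy : y ^ (2 * k + 1) = d + s) (hy' : y' ^ (2 * k + 1) = d - s) :
    (y * y') ^ (2 * k + 1) = d ^ 2 - s ^ 2 := by
  rw [mul_pow, hy, hy']
  ring

theorem mul_ne_zero_of_pow_odd (hy : y ^ (2 * k + 1) = d + s) (hy' : y' ^ (2 * k + 1) = d - s)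
    (hD : d ^ 2 - s ^ 2 ≠ 0) : y * y' ≠ 0 := fun h =>
  hD (by rw [← mul_pow_odd_eq_sq_sub_sq hy hy', h, zero_pow (by omega)])

theorem mul_pow_succ_mul_sub_eq (hy : y ^ (2 * k + 1) = d + s) (hy' : y' ^ (2 * k + 1) = d - s)
    (hD : d ^ 2 - s ^ 2 ≠ 0) :
    (y * y') ^ (k + 1) *
        ((y / y') ^ k + (y' / y) ^ k - d / (d ^ 2 - s ^ 2) * ((y * y') ^ k * (y + y'))) =
      s * (y' - y) := by
  have hz := mul_pow_odd_eq_sq_sub_sq hy hy'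
  have hz0 := mul_ne_zero_of_pow_odd hy hy' hD
  have hy0 : y ≠ 0 := left_ne_zero_of_mul hz0
  have hy'0 : y' ≠ 0 := right_ne_zero_of_mul hz0
  have h1 : (y * y') ^ (k + 1) * (y / y') ^ k = (d + s) * y' := by
    rw [← hy, div_pow, mul_div_assoc', div_eq_iff (pow_ne_zero _ hy'0)]
    ring
  have h2 : (y * y') ^ (k + 1) * (y' / y) ^ k = (d - s) * y := by
    rw [← hy', div_pow, mul_div_assoc', div_eq_iff (pow_ne_zero _ hy0)]
    ring
  have h3 : (y * y') ^ (k + 1) * (d / (d ^ 2 - s ^ 2) * ((y * y') ^ k * (y + y'))) =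
      d * (y + y') := by
    rw [← hz]
    field_simp
    ring
  rw [mul_sub, mul_add, h1, h2, h3]
  ring

theorem pair_eq_radical_reduction [NeZero (2 : K)] {R : K} (hy : y ^ (2 * k + 1) = d + s)
    (hy' : y' ^ (2 * k + 1) = d - s) (hs : s ^ 2 = R) (hR : R ≠ 0) (hD : d ^ 2 - R ≠ 0) :
    ({y, y'} : Set K) =
      { (y * y') ^ (k + 1) * ((y * y') ^ k * (y + y') / (2 * (d ^ 2 - R)) +
          ((y / y') ^ k + (y' / y) ^ k - d / (d ^ 2 - R) * ((y * y') ^ k * (y + y'))) *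
            (1 / (2 * R)) * s),
        (y * y') ^ (k + 1) * ((y * y') ^ k * (y + y') / (2 * (d ^ 2 - R)) -
          ((y / y') ^ k + (y' / y) ^ k - d / (d ^ 2 - R) * ((y * y') ^ k * (y + y'))) *
            (1 / (2 * R)) * s) } := by
  have hz := mul_pow_odd_eq_sq_sub_sq hy hy'
  rw [hs] at hz
  have hz0 := mul_ne_zero_of_pow_odd hy hy' (hs ▸ hD)
  have h_sym : (y * y') ^ (k + 1) * ((y * y') ^ k * (y + y') / (2 * (d ^ 2 - R))) =
      (y + y') / 2 := by
    rw [← hz]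
    field_simp
    ring
  have h_anti : (y * y') ^ (k + 1) *
      (((y / y') ^ k + (y' / y) ^ k - d / (d ^ 2 - R) * ((y * y') ^ k * (y + y'))) *
        (1 / (2 * R)) * s) = (y' - y) / 2 := by
    have hs0 : s ≠ 0 := fun h => hR (by rw [← hs, h, zero_pow two_ne_zero])
    have key := mul_pow_succ_mul_sub_eq hy hy' (hs ▸ hD)
    rw [hs] at key
    rw [← mul_assoc, ← mul_assoc, key, ← hs]
    field_simp
  rw [mul_add (_ ^ _), mul_sub (_ ^ _), h_sym, h_anti, Set.pair_comm]
  congr 2 <;> field_simp <;> ring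

end DeMoivre

theorem deMoivre_radical_reduction_general
    (n : ℕ) (hodd : Odd n)
    (d R : ℚ) (hR : ¬ IsSquare R)
    (sqrtR : ℂ) (hsR : sqrtR ^ 2 = (R : ℂ))
    (sd : ℂ) (hsd : sd ^ 2 = (d : ℂ) ^ 2 - (R : ℂ))
    (y y' : ℂ) (hy : y ^ n = (d : ℂ) + sqrtR) (hy' : y' ^ n = (d : ℂ) - sqrtR)
    (z u : ℂ) (hz : z = y * y') (hu : u = z ^ ((n - 1) / 2) * (y + y')) :
    ({y, y'} : Set ℂ) =
      { z ^ ((n + 1) / 2) *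
          (u / (2 * ((d : ℂ) ^ 2 - (R : ℂ))) + (Apoly n d R sd).eval u * sqrtR),
        z ^ ((n + 1) / 2) *
          (u / (2 * ((d : ℂ) ^ 2 - (R : ℂ))) - (Apoly n d R sd).eval u * sqrtR) } := by
  obtain ⟨k, rfl⟩ := hodd
  subst hz hu
  rw [show (2 * k + 1 - 1) / 2 = k by omega, show (2 * k + 1 + 1) / 2 = k + 1 by omega]
  have hR0 : (R : ℂ) ≠ 0 := by exact_mod_cast fun h => hR ⟨0, by simp [h]⟩
  have hD : (d : ℂ) ^ 2 - R ≠ 0 := by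
    exact_mod_cast fun h : d ^ (2 : ℕ) - R = 0 => hR ⟨d, by linear_combination -h⟩
  have hsd0 : sd ≠ 0 := by rintro rfl; exact hD (by simpa using hsd.symm)
  have hFc : (Fc ((2 * k + 1 : ℕ) - 1 : ℤ)).eval (sd⁻¹ * ((y * y') ^ k * (y + y'))) =
      (y / y') ^ k + (y' / y) ^ k := by
    rw [show ((2 * k + 1 : ℕ) - 1 : ℤ) = (2 * k : ℕ) by push_cast; ring, Fc_eq_chebyshev_C,
      Chebyshev.C_even_eval_of_sq_eq_mul_pow (by rw [hsd, mul_pow_odd_eq_sq_sub_sq hy hy', hsR])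
        hsd0]
  simp only [Apoly, eval_mul, eval_sub, eval_comp, eval_C, eval_X, hFc]
  exact pair_eq_radical_reduction hy hy' hsR hR0 hD

/-- **Proposition 1.**  Let `n ≥ 3` be odd, `d, R ∈ ℚ`, `d ≠ 0`, `R` not a square,
`D = d² - R`.  Fix `√R` and `√D` in ℂ, let `y, y'` satisfy `yⁿ = d + √R`, `y'ⁿ = d - √R`,
and set `z = y·y'`, `u = z^{(n-1)/2}(y + y')`.  Then
`{y, y'} = { z^{(n+1)/2}(u/(2D) + A(u)√R), z^{(n+1)/2}(u/(2D) - A(u)√R) }`. -/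
theorem deMoivre_radical_reduction
    (n : ℕ) (hn3 : 3 ≤ n) (hodd : Odd n)
    (d R : ℚ) (hd : d ≠ 0) (hR : ¬ IsSquare R)
    (sqrtR : ℂ) (hsR : sqrtR ^ 2 = (R : ℂ))
    (sd : ℂ) (hsd : sd ^ 2 = (d : ℂ) ^ 2 - (R : ℂ))
    (y y' : ℂ) (hy : y ^ n = (d : ℂ) + sqrtR) (hy' : y' ^ n = (d : ℂ) - sqrtR)
    (z u : ℂ) (hz : z = y * y') (hu : u = z ^ ((n - 1) / 2) * (y + y')) :
    ({y, y'} : Set ℂ) =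
      { z ^ ((n + 1) / 2) *
          (u / (2 * ((d : ℂ) ^ 2 - (R : ℂ))) + (Apoly n d R sd).eval u * sqrtR),
        z ^ ((n + 1) / 2) *
          (u / (2 * ((d : ℂ) ^ 2 - (R : ℂ))) - (Apoly n d R sd).eval u * sqrtR) } :=
  deMoivre_radical_reduction_general n hodd d R hR sqrtR hsR sd hsd y y' hy hy' z u hz hu
end

section
/- With the notation of the context, there is a sign ε ∈ {+1, −1} such that for every k = 0, 1, …, n−1 one has u_k = (u/2)·(ζ^k + ζ^{−k}) + ε·D·A(u)·√R·(ζ^k − ζ^{−k}); moreover A(u) ≠ 0. -/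
/-!
With `D = d² - R`, `n = 2m + 1`, `a = z^m y` and `b = z^m y'` one has `u = a + b`, `ab = D`,
`aⁿ = Dᵐ(d + √R)` and `bⁿ = Dᵐ(d - √R)`. Since `(a/√D)(b/√D) = 1`, the Dickson identity
`F_j(x + x⁻¹) = xʲ + x⁻ʲ` gives `F_{2m}(u/√D) = (a^{2m} + b^{2m})/Dᵐ = ((d + √R) b + (d - √R) a)/D`,
whence `D A(u) √R = (b - a)/2`. The formula then is the identity
`a ζᵏ + b ζ⁻ᵏ = (a + b)/2 (ζᵏ + ζ⁻ᵏ) - (b - a)/2 (ζᵏ - ζ⁻ᵏ)`, i.e. `ε = -1`,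
and `A(u) ≠ 0` because `aⁿ ≠ bⁿ`.
-/

open Polynomial

theorem Polynomial.dickson_one_one_eval_inv_mul_add {K : Type*} [Field K] {a b s : K}
    (hs : s ≠ 0) (hab : a * b = s ^ 2) (m : ℕ) :
    (dickson 1 (1 : K) m).eval (s⁻¹ * (a + b)) = (a ^ m + b ^ m) / s ^ m := by
  have h : a / s * (b / s) = 1 := by
    rw [div_mul_div_comm, hab, ← sq, div_self (pow_ne_zero 2 hs)]
  rw [show s⁻¹ * (a + b) = a / s + b / s by ring, dickson_one_one_eval_add_inv _ _ h,
    div_pow, div_pow, add_div]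

theorem Fc_natCast (m : ℕ) : Fc m = dickson 1 (1 : ℂ) m := by
  rw [Fc, dickson_one_one_eq_chebyshev_T, invOf_eq_inv, one_div]

theorem Apoly_eval_add_mul_sqrt {m : ℕ} {d R : ℚ} {sqrtR sd a b : ℂ}
    (hsR : sqrtR ^ 2 = R) (hsd : sd ^ 2 = (d : ℂ) ^ 2 - R) (hR : (R : ℂ) ≠ 0)
    (hD : (d : ℂ) ^ 2 - R ≠ 0) (hab : a * b = (d : ℂ) ^ 2 - R)
    (ha : a ^ (2 * m + 1) = ((d : ℂ) ^ 2 - R) ^ m * (d + sqrtR))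
    (hb : b ^ (2 * m + 1) = ((d : ℂ) ^ 2 - R) ^ m * (d - sqrtR)) :
    ((d : ℂ) ^ 2 - R) * (Apoly (2 * m + 1) d R sd).eval (a + b) * sqrtR = (b - a) / 2 := by
  have hsd0 : sd ≠ 0 := by rintro rfl; exact hD (by rw [← hsd]; ring)
  have hF : (Fc ((2 * m + 1 : ℕ) - 1 : ℤ)).eval (sd⁻¹ * (a + b))
      = ((d + sqrtR) * b + (d - sqrtR) * a) / ((d : ℂ) ^ 2 - R) := by
    have hcast : ((2 * m + 1 : ℕ) - 1 : ℤ) = ((2 * m : ℕ) : ℤ) := by push_cast; ring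
    rw [hcast, Fc_natCast, dickson_one_one_eval_inv_mul_add hsd0 (hab.trans hsd.symm),
      pow_mul sd, hsd, div_eq_div_iff (pow_ne_zero m hD) hD]
    linear_combination b * ha + a * hb - (a ^ (2 * m) + b ^ (2 * m)) * hab
  simp only [Apoly, eval_mul, eval_sub, eval_comp, eval_C, eval_X, hF]
  field_simp
  linear_combination (b - a) * hsR

theorem deMoivre_roots_formula_general
    (n : ℕ) (hodd : Odd n)
    (d R : ℚ) (hR : ¬ IsSquare R)
    (sqrtR : ℂ) (hsR : sqrtR ^ 2 = (R : ℂ))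
    (sd : ℂ) (hsd : sd ^ 2 = (d : ℂ) ^ 2 - (R : ℂ))
    (y y' : ℂ) (hy : y ^ n = (d : ℂ) + sqrtR) (hy' : y' ^ n = (d : ℂ) - sqrtR)
    (z u : ℂ) (hz : z = y * y') (hu : u = z ^ ((n - 1) / 2) * (y + y'))
    (ζ : ℂ) :
    (Apoly n d R sd).eval u ≠ 0 ∧
    ∃ ε : ℂ, (ε = 1 ∨ ε = -1) ∧
      ∀ k < n,
        z ^ ((n - 1) / 2) * (y * ζ ^ k + y' * (ζ ^ k)⁻¹) =
          u / 2 * (ζ ^ k + (ζ ^ k)⁻¹) +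
            ε * ((d : ℂ) ^ 2 - (R : ℂ)) * (Apoly n d R sd).eval u * sqrtR
              * (ζ ^ k - (ζ ^ k)⁻¹) := by
  obtain ⟨m, rfl⟩ := hodd
  rw [show (2 * m + 1 - 1) / 2 = m by omega] at hu ⊢
  subst hu
  have hR0 : (R : ℂ) ≠ 0 := by
    exact_mod_cast fun h : R = 0 => hR (h ▸ IsSquare.zero)
  have hD : (d : ℂ) ^ 2 - R ≠ 0 := by
    exact_mod_cast fun h : d ^ (2 : ℕ) - R = 0 => hR ⟨d, by linear_combination -h⟩
  have hzn : z ^ (2 * m + 1) = (d : ℂ) ^ 2 - R := by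
    rw [hz, mul_pow, hy, hy']
    linear_combination -hsR
  have hab : z ^ m * y * (z ^ m * y') = (d : ℂ) ^ 2 - R := by
    rw [← hzn, hz]; ring
  have ha : (z ^ m * y) ^ (2 * m + 1) = ((d : ℂ) ^ 2 - R) ^ m * (d + sqrtR) := by
    rw [← hzn, ← hy]; ring
  have hb : (z ^ m * y') ^ (2 * m + 1) = ((d : ℂ) ^ 2 - R) ^ m * (d - sqrtR) := by
    rw [← hzn, ← hy']; ring
  have hkey := Apoly_eval_add_mul_sqrt hsR hsd hR0 hD hab ha hb
  rw [← mul_add] at hkey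
  have hne : z ^ m * y' - z ^ m * y ≠ 0 := by
    rw [sub_ne_zero]
    intro h
    rw [h] at hb
    have hpm := mul_left_cancel₀ (pow_ne_zero m hD) (ha.symm.trans hb)
    exact hR0 (by linear_combination -hsR + sqrtR / 2 * hpm)
  refine ⟨?_, -1, Or.inr rfl, fun k _ => ?_⟩
  · exact right_ne_zero_of_mul (left_ne_zero_of_mul (hkey ▸ div_ne_zero hne two_ne_zero))
  · linear_combination (ζ ^ k - (ζ ^ k)⁻¹) * hkey

/-- **Formula (3.4).**  With `u_k = z^{(n-1)/2}(y ζ^k + y' ζ^{-k})` and `u = u_0`, one has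
`A(u) ≠ 0`, and there is a sign `ε ∈ {+1, -1}` such that for every `k = 0, …, n-1`,
`u_k = (u/2)(ζ^k + ζ^{-k}) + ε D A(u) √R (ζ^k - ζ^{-k})`. -/
theorem deMoivre_roots_formula
    (n : ℕ) (hn3 : 3 ≤ n) (hodd : Odd n)
    (d R : ℚ) (hd : d ≠ 0) (hR : ¬ IsSquare R)
    (sqrtR : ℂ) (hsR : sqrtR ^ 2 = (R : ℂ))
    (sd : ℂ) (hsd : sd ^ 2 = (d : ℂ) ^ 2 - (R : ℂ))
    (y y' : ℂ) (hy : y ^ n = (d : ℂ) + sqrtR) (hy' : y' ^ n = (d : ℂ) - sqrtR)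
    (z u : ℂ) (hz : z = y * y') (hu : u = z ^ ((n - 1) / 2) * (y + y'))
    (ζ : ℂ) (hζ : IsPrimitiveRoot ζ n) :
    (Apoly n d R sd).eval u ≠ 0 ∧
    ∃ ε : ℂ, (ε = 1 ∨ ε = -1) ∧
      ∀ k < n,
        z ^ ((n - 1) / 2) * (y * ζ ^ k + y' * (ζ ^ k)⁻¹) =
          u / 2 * (ζ ^ k + (ζ ^ k)⁻¹) +
            ε * ((d : ℂ) ^ 2 - (R : ℂ)) * (Apoly n d R sd).eval u * sqrtR
              * (ζ ^ k - (ζ ^ k)⁻¹) :=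
  deMoivre_roots_formula_general n hodd d R hR sqrtR hsR sd hsd y y' hy hy' z u hz hu ζ
end

section
/- Suppose R < 0 and √R ∈ ℚ(ζ). Then K = ℚ(√R·(ζ − ζ^{−1})) equals the maximal real subfield ℚ(ζ + ζ^{−1}) of ℚ(ζ), K is a Galois extension of ℚ, and Gal(K/ℚ) is isomorphic to the quotient group (ℤ/nℤ)ˣ/{±1}. -/
/-!
Work inside `L = ℚ(ζ)`, whose Galois group is `(ℤ/nℤ)ˣ` via `σ ζ = ζ ^ a`. Complex conjugation `c`
acts on `L` as `a = -1` and fixes `β = ζ + ζ⁻¹`; since `R < 0` it negates `√R`, so it also fixes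
`α = √R (ζ - ζ⁻¹)`. Conversely, `σ β = β` forces `σ ζ = ζ ^ (±1)`, and `σ α = α` together with
`σ √R = ±√R` forces `σ ζ - (σ ζ)⁻¹ = ±(ζ - ζ⁻¹)`, hence again `σ ζ = ζ ^ (±1)`: the other solutions
`-ζ ^ (∓1)` are not `n`-th roots of unity for odd `n`. So `α` and `β` have the same stabiliser
`{1, c}`, which corresponds to `{±1}`, and by the Galois correspondence `ℚ(α) = ℚ(β)` is the fixed
field of this normal subgroup, Galois over `ℚ` with group `(ℤ/nℤ)ˣ / {±1}`.
-/

open IntermediateField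

section FieldIdentities

variable {K : Type*} [Field K] {u v : K}

theorem add_inv_eq_add_inv_iff (hu : u ≠ 0) (hv : v ≠ 0) :
    u + u⁻¹ = v + v⁻¹ ↔ u = v ∨ u = v⁻¹ := by
  have key : (u + u⁻¹ - (v + v⁻¹)) * u = (u - v) * (u - v⁻¹) := by
    field_simp
    ring
  rw [← sub_eq_zero, ← mul_left_inj' hu, zero_mul, key, mul_eq_zero, sub_eq_zero, sub_eq_zero]

theorem sub_inv_eq_sub_inv_iff (hu : u ≠ 0) (hv : v ≠ 0) :
    u - u⁻¹ = v - v⁻¹ ↔ u = v ∨ u = -v⁻¹ := by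
  have key : (u - u⁻¹ - (v - v⁻¹)) * u = (u - v) * (u + v⁻¹) := by
    field_simp
    ring
  rw [← sub_eq_zero, ← mul_left_inj' hu, zero_mul, key, mul_eq_zero, sub_eq_zero,
    add_eq_zero_iff_eq_neg]

theorem eq_of_sub_inv_eq_sub_inv_of_pow_eq_one [CharZero K] {n : ℕ} (hn : Odd n)
    (hu : u ^ n = 1) (hv : v ^ n = 1) (h : u - u⁻¹ = v - v⁻¹) : u = v := by
  have hu0 : u ≠ 0 := by rintro rfl; simp [zero_pow hn.pos.ne'] at hu
  have hv0 : v ≠ 0 := by rintro rfl; simp [zero_pow hn.pos.ne'] at hv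
  refine ((sub_inv_eq_sub_inv_iff hu0 hv0).mp h).resolve_right fun huv ↦ ?_
  rw [huv, hn.neg_pow, inv_pow, hv, inv_one] at hu
  norm_num at hu

end FieldIdentities

theorem mem_zpowers_neg_one_iff {G : Type*} [Group G] [HasDistribNeg G] [Finite G] {x : G} :
    x ∈ Subgroup.zpowers (-1 : G) ↔ x = 1 ∨ x = -1 := by
  refine ⟨fun h ↦ ?_, ?_⟩
  · obtain ⟨k, rfl⟩ := mem_powers_iff_mem_zpowers.mpr h
    exact neg_one_pow_eq_or G k
  · rintro (rfl | rfl)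
    exacts [Subgroup.one_mem _, Subgroup.mem_zpowers _]

namespace IntermediateField

variable {F E : Type*} [Field F] [Field E] [Algebra F E]

theorem mem_fixingSubgroup_adjoin_simple_iff (x : E) (σ : Gal(E/F)) :
    σ ∈ F⟮x⟯.fixingSubgroup ↔ σ x = x := by
  rw [← Subgroup.zpowers_le, ← le_iff_le, adjoin_simple_le_iff]
  exact ⟨fun h ↦ h ⟨σ, Subgroup.mem_zpowers σ⟩,
    fun h τ ↦ (Subgroup.zpowers_le (H := MulAction.stabilizer Gal(E/F) x)).mpr h τ.2⟩

theorem adjoin_simple_eq_of_forall_apply_eq_iff [FiniteDimensional F E] [IsGalois F E] {x y : E}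
    (h : ∀ σ : Gal(E/F), σ x = x ↔ σ y = y) : F⟮x⟯ = F⟮y⟯ := by
  rw [← IsGalois.fixedField_fixingSubgroup F⟮x⟯, ← IsGalois.fixedField_fixingSubgroup F⟮y⟯]
  congr 1
  ext σ
  simp only [mem_fixingSubgroup_adjoin_simple_iff, h]

end IntermediateField

section Stabilizers

variable {F L : Type*} [Field F] [Field L] [Algebra F L] {ζ : L} {c σ : Gal(L/F)}

theorem IsPrimitiveRoot.algEquiv_apply_injective {n : ℕ} [NeZero n]
    [IsCyclotomicExtension {n} F L] (hζ : IsPrimitiveRoot ζ n) :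
    Function.Injective fun σ : Gal(L/F) ↦ σ ζ := fun _ _ h ↦
  AlgEquiv.coe_toAlgHom_injective ((hζ.powerBasis F).algHom_ext h)

theorem AlgEquiv.apply_eq_self_or_eq_inv_iff (hgen : Function.Injective fun τ : Gal(L/F) ↦ τ ζ)
    (hc : c ζ = ζ⁻¹) : σ ζ = ζ ∨ σ ζ = ζ⁻¹ ↔ σ = 1 ∨ σ = c := by
  rw [← hc]
  exact or_congr (hgen.eq_iff (b := 1)) hgen.eq_iff

theorem AlgEquiv.apply_add_inv_eq_self_iff (hgen : Function.Injective fun τ : Gal(L/F) ↦ τ ζ)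
    (hc : c ζ = ζ⁻¹) (hζ : ζ ≠ 0) : σ (ζ + ζ⁻¹) = ζ + ζ⁻¹ ↔ σ = 1 ∨ σ = c := by
  rw [map_add, map_inv₀, add_inv_eq_add_inv_iff ((map_ne_zero σ).mpr hζ) hζ,
    apply_eq_self_or_eq_inv_iff hgen hc]

theorem AlgEquiv.apply_mul_sub_inv_eq_self_iff [CharZero L] {n : ℕ} (hn : Odd n) (hζ : ζ ^ n = 1)
    (hgen : Function.Injective fun τ : Gal(L/F) ↦ τ ζ) (hcζ : c ζ = ζ⁻¹) {s : L} {r : F}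
    (hs : s ^ 2 = algebraMap F L r) (hs0 : s ≠ 0) (hcs : c s = -s) :
    σ (s * (ζ - ζ⁻¹)) = s * (ζ - ζ⁻¹) ↔ σ = 1 ∨ σ = c := by
  refine ⟨fun h ↦ (apply_eq_self_or_eq_inv_iff hgen hcζ).mp ?_, ?_⟩
  · have hσζ : σ ζ ^ n = 1 := by rw [← map_pow, hζ, map_one]
    have hσs : σ s = s ∨ σ s = -s :=
      sq_eq_sq_iff_eq_or_eq_neg.mp (by rw [← map_pow, hs, AlgEquiv.commutes])
    rw [map_mul, map_sub, map_inv₀] at h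
    rcases hσs with hσs | hσs
    · refine .inl (eq_of_sub_inv_eq_sub_inv_of_pow_eq_one hn hσζ hζ ?_)
      rw [hσs] at h
      exact mul_left_cancel₀ hs0 h
    · refine .inr (eq_of_sub_inv_eq_sub_inv_of_pow_eq_one hn hσζ (by rw [inv_pow, hζ, inv_one]) ?_)
      rw [hσs] at h
      rw [inv_inv]
      exact mul_left_cancel₀ hs0 (by linear_combination -h)
  · rintro (rfl | rfl)
    · rfl
    · rw [map_mul, map_sub, map_inv₀, hcs, hcζ, inv_inv]
      ring

theorem IntermediateField.adjoin_mul_sub_inv_eq_adjoin_add_inv [FiniteDimensional F L]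
    [IsGalois F L] [CharZero L] {n : ℕ} (hn : Odd n) (hζ : ζ ^ n = 1)
    (hgen : Function.Injective fun τ : Gal(L/F) ↦ τ ζ) (hcζ : c ζ = ζ⁻¹) {s : L} {r : F}
    (hs : s ^ 2 = algebraMap F L r) (hs0 : s ≠ 0) (hcs : c s = -s) :
    F⟮s * (ζ - ζ⁻¹)⟯ = F⟮ζ + ζ⁻¹⟯ := by
  have hζ0 : ζ ≠ 0 := by rintro rfl; simp [zero_pow hn.pos.ne'] at hζ
  refine adjoin_simple_eq_of_forall_apply_eq_iff fun σ ↦ ?_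
  rw [AlgEquiv.apply_mul_sub_inv_eq_self_iff hn hζ hgen hcζ hs hs0 hcs,
    AlgEquiv.apply_add_inv_eq_self_iff hgen hcζ hζ0]

end Stabilizers

theorem IntermediateField.isGalois_and_nonempty_autEquivQuotient_of_fixingSubgroup_eq
    {F E G : Type*} [Field F] [Field E] [Algebra F E] [FiniteDimensional F E] [IsGalois F E]
    [Group G] (ψ : Gal(E/F) ≃* G) (N : Subgroup G) [N.Normal] {M : IntermediateField F E}
    (hM : M.fixingSubgroup = N.comap ψ.toMonoidHom) :
    IsGalois F M ∧ Nonempty (Gal(M/F) ≃* G ⧸ N) := by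
  have e : fixedField (N.comap ψ.toMonoidHom) ≃ₐ[F] M :=
    equivOfEq (by rw [← hM, IsGalois.fixedField_fixingSubgroup])
  refine ⟨IsGalois.of_algEquiv e, ⟨(AlgEquiv.autCongr e).symm.trans ?_⟩⟩
  exact (IsGalois.normalAutEquivQuotient _).symm.trans
    (QuotientGroup.congr _ _ ψ (Subgroup.map_comap_eq_self_of_surjective ψ.surjective N))

namespace IsCyclotomicExtension

open Polynomial

variable {F L : Type*} [Field F] [Field L] [Algebra F L] {n : ℕ} [NeZero n]
  [IsCyclotomicExtension {n} F L] {ζ : L} {c : Gal(L/F)}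

theorem autEquivPow_apply_of_pow_eq_one (hirr : Irreducible (cyclotomic n F)) (σ : Gal(L/F))
    {x : L} (hx : x ^ n = 1) :
    σ x = x ^ (autEquivPow L hirr σ : ZMod n).val := by
  obtain ⟨a, -, rfl⟩ := (zeta_spec n F L).eq_pow_of_pow_eq_one hx
  rw [map_pow, pow_right_comm, autEquivPow_apply, OneHom.toFun_eq_coe, MonoidHom.toOneHom_coe,
    IsPrimitiveRoot.autToPow_spec]

theorem autEquivPow_eq_neg_one (hirr : Irreducible (cyclotomic n F)) (hζ : IsPrimitiveRoot ζ n)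
    (hc : c ζ = ζ⁻¹) : autEquivPow L hirr c = -1 := by
  have hdvd : n ∣ (autEquivPow L hirr c : ZMod n).val + 1 := by
    rw [← hζ.pow_eq_one_iff_dvd, pow_succ, ← autEquivPow_apply_of_pow_eq_one hirr c hζ.pow_eq_one,
      hc, inv_mul_cancel₀ (hζ.ne_zero (NeZero.ne n))]
  apply Units.ext
  rw [Units.val_neg, Units.val_one, eq_neg_iff_add_eq_zero]
  simpa using (ZMod.natCast_eq_zero_iff _ _).mpr hdvd

theorem fixingSubgroup_adjoin_add_inv (hirr : Irreducible (cyclotomic n F))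
    (hζ : IsPrimitiveRoot ζ n) (hc : c ζ = ζ⁻¹) :
    F⟮ζ + ζ⁻¹⟯.fixingSubgroup =
      (Subgroup.zpowers (-1)).comap (autEquivPow L hirr).toMonoidHom := by
  ext σ
  rw [mem_fixingSubgroup_adjoin_simple_iff,
    AlgEquiv.apply_add_inv_eq_self_iff hζ.algEquiv_apply_injective hc (hζ.ne_zero (NeZero.ne n)),
    Subgroup.mem_comap, mem_zpowers_neg_one_iff, ← autEquivPow_eq_neg_one hirr hζ hc]
  exact or_congr (MulEquiv.map_eq_one_iff _).symm (autEquivPow L hirr).injective.eq_iff.symm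

theorem adjoin_mul_sub_inv_eq_and_isGalois [CharZero L] (hirr : Irreducible (cyclotomic n F))
    (hn : Odd n) (hζ : IsPrimitiveRoot ζ n) (hcζ : c ζ = ζ⁻¹) {s : L} {r : F}
    (hs : s ^ 2 = algebraMap F L r) (hs0 : s ≠ 0) (hcs : c s = -s) :
    F⟮s * (ζ - ζ⁻¹)⟯ = F⟮ζ + ζ⁻¹⟯ ∧ IsGalois F F⟮ζ + ζ⁻¹⟯ ∧
      Nonempty (Gal(F⟮ζ + ζ⁻¹⟯/F) ≃* (ZMod n)ˣ ⧸ Subgroup.zpowers (-1 : (ZMod n)ˣ)) := by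
  have := isGalois {n} F L
  have := finiteDimensional {n} F L
  exact ⟨adjoin_mul_sub_inv_eq_adjoin_add_inv hn hζ.pow_eq_one hζ.algEquiv_apply_injective hcζ hs
      hs0 hcs,
    isGalois_and_nonempty_autEquivQuotient_of_fixingSubgroup_eq _ _
      (fixingSubgroup_adjoin_add_inv hirr hζ hcζ)⟩

end IsCyclotomicExtension

theorem IntermediateField.adjoin_coe_eq_and_isGalois_of {F E G : Type*} [Field F] [Field E]
    [Algebra F E] [Group G] {M : IntermediateField F E} {x y : M}
    (h : F⟮x⟯ = F⟮y⟯ ∧ IsGalois F F⟮y⟯ ∧ Nonempty (Gal(F⟮y⟯/F) ≃* G)) :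
    F⟮(x : E)⟯ = F⟮(y : E)⟯ ∧ IsGalois F F⟮(x : E)⟯ ∧ Nonempty (Gal(F⟮(x : E)⟯/F) ≃* G) := by
  obtain ⟨hxy, _, ⟨e⟩⟩ := h
  rw [← lift_adjoin_simple, ← lift_adjoin_simple, hxy]
  exact ⟨rfl, IsGalois.of_algEquiv (liftAlgEquiv _),
    ⟨(AlgEquiv.autCongr (liftAlgEquiv _)).symm.trans e⟩⟩

open ComplexConjugate in
theorem Complex.conj_eq_neg_of_sq_eq_of_neg {z : ℂ} {r : ℝ} (hr : r < 0) (h : z ^ 2 = r) :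
    conj z = -z := by
  have hre := congrArg Complex.re h
  have him := congrArg Complex.im h
  simp only [sq, Complex.mul_re, Complex.mul_im, Complex.ofReal_re, Complex.ofReal_im] at hre him
  have hz : z.re = 0 := by
    by_contra h0
    have : z.im = 0 := by
      rcases mul_eq_zero.mp (show z.re * (2 * z.im) = 0 by linarith) with h1 | h1
      · exact absurd h1 h0
      · linarith
    nlinarith [sq_nonneg z.re]
  exact Complex.ext (by simp [hz]) (by simp)

open ComplexConjugate in
theorem IntermediateField.coe_restrictNormal_conjAe (L : IntermediateField ℚ ℂ) [Normal ℚ L]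
    (x : L) : ((Complex.conjAe.restrictScalars ℚ).restrictNormal L x : ℂ) = conj (x : ℂ) :=
  AlgEquiv.restrictNormal_commutes _ L x

theorem galK_exceptional_general
    (n : ℕ) (hodd : Odd n)
    (R : ℚ)
    (sqrtR : ℂ) (hsR : sqrtR ^ 2 = (R : ℂ))
    (ζ : ℂ) (hζ : IsPrimitiveRoot ζ n)
    (hRneg : R < 0) (hmem : sqrtR ∈ IntermediateField.adjoin ℚ ({ζ} : Set ℂ))
    (K : IntermediateField ℚ ℂ)
    (hK : K = IntermediateField.adjoin ℚ ({sqrtR * (ζ - ζ⁻¹)} : Set ℂ)) :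
    K = IntermediateField.adjoin ℚ ({ζ + ζ⁻¹} : Set ℂ) ∧
    IsGalois ℚ K ∧
    Nonempty ((K ≃ₐ[ℚ] K) ≃* ((ZMod n)ˣ ⧸ Subgroup.zpowers (-1 : (ZMod n)ˣ))) := by
  subst hK
  have : NeZero n := ⟨hodd.pos.ne'⟩
  have : IsCyclotomicExtension {n} ℚ ℚ⟮ζ⟯ :=
    (isCyclotomicExtension_singleton_iff_eq_adjoin n ℚ ℂ ℚ⟮ζ⟯ hζ).mpr rfl
  have := IsCyclotomicExtension.isGalois {n} ℚ ℚ⟮ζ⟯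
  set ζL := AdjoinSimple.gen ℚ ζ
  set s : ℚ⟮ζ⟯ := ⟨sqrtR, hmem⟩
  set c : Gal(ℚ⟮ζ⟯/ℚ) := (Complex.conjAe.restrictScalars ℚ).restrictNormal ℚ⟮ζ⟯
  have hζL : IsPrimitiveRoot ζL n := IsPrimitiveRoot.coe_submonoidClass_iff.mp hζ
  have hcζ : c ζL = ζL⁻¹ := Subtype.ext <| by
    rw [coe_restrictNormal_conjAe, IntermediateField.coe_inv, AdjoinSimple.coe_gen,
      Complex.inv_eq_conj (Complex.norm_eq_one_of_pow_eq_one hζ.pow_eq_one (NeZero.ne n))]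
  have hcs : c s = -s := Subtype.ext <| by
    rw [coe_restrictNormal_conjAe]
    exact Complex.conj_eq_neg_of_sq_eq_of_neg (r := R) (by exact_mod_cast hRneg)
      (by simpa using hsR)
  have hs : s ^ 2 = algebraMap ℚ ℚ⟮ζ⟯ R := Subtype.ext (by simpa using hsR)
  have hs0 : s ≠ 0 := by
    rintro h
    rw [h, zero_pow two_ne_zero, eq_comm, map_eq_zero] at hs
    exact hRneg.ne hs
  exact adjoin_coe_eq_and_isGalois_of (x := s * (ζL - ζL⁻¹)) (y := ζL + ζL⁻¹)
    (IsCyclotomicExtension.adjoin_mul_sub_inv_eq_and_isGalois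
      (Polynomial.cyclotomic.irreducible_rat hodd.pos) hodd hζL hcζ hs hs0 hcs)

/-- **Proposition 4, exceptional case.**  Let `n ≥ 3` be odd and `R ∈ ℚ` a nonzero rational
that is not a square.  If `R < 0` and `√R ∈ ℚ(ζ)`, then `K = ℚ(√R(ζ - ζ⁻¹))` equals the
maximal real subfield `ℚ(ζ + ζ⁻¹)` of `ℚ(ζ)`, is Galois over ℚ, and its Galois group is
isomorphic to `(ℤ/nℤ)ˣ/{±1}`. -/
theorem galK_exceptional
    (n : ℕ) (hn3 : 3 ≤ n) (hodd : Odd n)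
    (R : ℚ) (hR0 : R ≠ 0) (hR : ¬ IsSquare R)
    (sqrtR : ℂ) (hsR : sqrtR ^ 2 = (R : ℂ))
    (ζ : ℂ) (hζ : IsPrimitiveRoot ζ n)
    (hRneg : R < 0) (hmem : sqrtR ∈ IntermediateField.adjoin ℚ ({ζ} : Set ℂ))
    (K : IntermediateField ℚ ℂ)
    (hK : K = IntermediateField.adjoin ℚ ({sqrtR * (ζ - ζ⁻¹)} : Set ℂ)) :
    K = IntermediateField.adjoin ℚ ({ζ + ζ⁻¹} : Set ℂ) ∧
    IsGalois ℚ K ∧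
    Nonempty ((K ≃ₐ[ℚ] K) ≃* ((ZMod n)ˣ ⧸ Subgroup.zpowers (-1 : (ZMod n)ˣ))) :=
  galK_exceptional_general n hodd R sqrtR hsR ζ hζ hRneg hmem K hK
end

section
/- Let d, R be integers with R not a perfect square, gcd(d,R) = 1, and D = d² − R. Suppose that for each prime p dividing n there exists a prime q ≥ 3 such that the q-adic valuation v_q(D) is odd and not divisible by p. Then f_n = f_n(Z,d,R) is irreducible in ℚ[Z]. -/
/-!
Write `n = 2m + 1`. Over `ℤ`, `f_n = Σ_k c_k D^k Z^(n-2k) - d D^m` is monic with integral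
`c_k`. Take a prime `q` with `v = v_q(D)` positive; then `q ∤ d` since `gcd(d, R) = 1`. The
constant term has valuation exactly `m v` and the coefficient of `Z^(n-2k)` valuation at least
`k v`, so the Newton polygon of `f_n` at `q` is the single segment from `(0, m v)` to `(n, 0)`.
Hence every monic factor `g` has `n · v_q(g 0) = m v · deg g`. A prime `p ∣ n` does not divide
`m`, and for the `q` attached to `p` it does not divide `v`; so the full power of `p` in `n`
divides `deg g`. Thus `n ∣ deg g`, `f_n` is irreducible over `ℤ`, and by Gauss's lemma over
`ℚ`.
-/

open Polynomial

/-- The De Moivre polynomial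
`f_n(Z,d,R) = Σ_{k=0}^{(n-1)/2} (-1)^k (n/(n-k)) C(n-k,k) D^k Z^{n-2k} - d D^{(n-1)/2}`,
where `D = d² - R`. -/
noncomputable def deMoivre (n : ℕ) (d R : ℚ) : ℚ[X] :=
  (∑ k ∈ Finset.range ((n - 1) / 2 + 1),
      C ((-1 : ℚ) ^ k * ((n : ℚ) / ((n : ℚ) - (k : ℚ))) * ((n - k).choose k : ℚ)
          * (d ^ 2 - R) ^ k) * X ^ (n - 2 * k))
    - C (d * (d ^ 2 - R) ^ ((n - 1) / 2))

theorem padicValInt_add_of_pow_succ_dvd {q : ℕ} (hq : q ≠ 1) {x y : ℤ} (hx : x ≠ 0)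
    (hy : (q : ℤ) ^ (padicValInt q x + 1) ∣ y) :
    x + y ≠ 0 ∧ padicValInt q (x + y) = padicValInt q x := by
  have hx_not : ¬ (q : ℤ) ^ (padicValInt q x + 1) ∣ x := by
    rw [padicValInt_dvd_iff_of_ne_one hq]; omega
  have hxy_not : ¬ (q : ℤ) ^ (padicValInt q x + 1) ∣ x + y := fun h =>
    hx_not (by simpa using dvd_sub h hy)
  have hxy0 : x + y ≠ 0 := fun h => hxy_not (h ▸ dvd_zero _)
  have hle : padicValInt q x ≤ padicValInt q (x + y) :=
    ((padicValInt_dvd_iff_of_ne_one hq _ _).1 (dvd_add (padicValInt_dvd x)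
      ((pow_dvd_pow _ (Nat.le_succ _)).trans hy))).resolve_left hxy0
  refine ⟨hxy0, le_antisymm ?_ hle⟩
  by_contra! hlt
  exact hxy_not ((padicValInt_dvd_iff_of_ne_one hq _ _).2 (Or.inr hlt))

namespace Polynomial

open Finset

section WeightedValuation

variable {q a b : ℕ}

-- The Gauss valuation of `P (π ^ b * X)`, normalised so that `v π = 1` and `v q = a`.
variable (q a b) in
noncomputable def weightedVal (P : ℤ[X]) : ℕ :=
  if h : P.support.Nonempty then
    P.support.inf' h fun i => a * padicValInt q (P.coeff i) + b * i
  else 0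

theorem weightedVal_le {P : ℤ[X]} {i : ℕ} (hi : P.coeff i ≠ 0) :
    weightedVal q a b P ≤ a * padicValInt q (P.coeff i) + b * i := by
  rw [weightedVal, dif_pos ⟨i, mem_support_iff.2 hi⟩]
  exact Finset.inf'_le _ (mem_support_iff.2 hi)

theorem le_weightedVal {P : ℤ[X]} (hP : P ≠ 0) {c : ℕ}
    (h : ∀ i, P.coeff i ≠ 0 → c ≤ a * padicValInt q (P.coeff i) + b * i) :
    c ≤ weightedVal q a b P := by
  rw [weightedVal, dif_pos (nonempty_support_iff.2 hP)]
  exact Finset.le_inf' _ _ fun i hi => h i (mem_support_iff.1 hi)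

theorem exists_least_weightedVal_eq {P : ℤ[X]} (hP : P ≠ 0) :
    ∃ i, P.coeff i ≠ 0 ∧ a * padicValInt q (P.coeff i) + b * i = weightedVal q a b P ∧
      ∀ j < i, P.coeff j ≠ 0 →
        weightedVal q a b P < a * padicValInt q (P.coeff j) + b * j := by
  classical
  have hex : ∃ i, P.coeff i ≠ 0 ∧
      a * padicValInt q (P.coeff i) + b * i = weightedVal q a b P := by
    obtain ⟨i, hi, heq⟩ := Finset.exists_mem_eq_inf' (nonempty_support_iff.2 hP)
      fun i => a * padicValInt q (P.coeff i) + b * i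
    refine ⟨i, mem_support_iff.1 hi, ?_⟩
    rw [weightedVal, dif_pos (nonempty_support_iff.2 hP), heq]
  refine ⟨Nat.find hex, (Nat.find_spec hex).1, (Nat.find_spec hex).2, fun j hj hPj => ?_⟩
  exact lt_of_le_of_ne (weightedVal_le hPj) fun h => Nat.find_min hex hj ⟨hPj, h.symm⟩

theorem weightedVal_mul_le (hq : q.Prime) {G H : ℤ[X]} (hG : G ≠ 0) (hH : H ≠ 0) :
    weightedVal q a b (G * H) ≤ weightedVal q a b G + weightedVal q a b H := by
  have : Fact q.Prime := ⟨hq⟩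
  obtain ⟨i₀, hGi₀, hwG, hltG⟩ := exists_least_weightedVal_eq (q := q) (a := a) (b := b) hG
  obtain ⟨j₀, hHj₀, hwH, hltH⟩ := exists_least_weightedVal_eq (q := q) (a := a) (b := b) hH
  have hlead : G.coeff i₀ * H.coeff j₀ ≠ 0 := mul_ne_zero hGi₀ hHj₀
  have hvlead : padicValInt q (G.coeff i₀ * H.coeff j₀) =
      padicValInt q (G.coeff i₀) + padicValInt q (H.coeff j₀) := padicValInt.mul hGi₀ hHj₀
  -- Every other product on the antidiagonal involves an index below `i₀` or `j₀`, hence has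
  -- strictly larger weight, hence strictly larger valuation.
  have hrest : (q : ℤ) ^ (padicValInt q (G.coeff i₀ * H.coeff j₀) + 1) ∣
      ∑ x ∈ (antidiagonal (i₀ + j₀)).erase (i₀, j₀), G.coeff x.1 * H.coeff x.2 := by
    refine Finset.dvd_sum fun x hx => ?_
    obtain ⟨hne, hx⟩ := Finset.mem_erase.1 hx
    rw [HasAntidiagonal.mem_antidiagonal] at hx
    by_cases hGx : G.coeff x.1 = 0
    · simp [hGx]
    by_cases hHx : H.coeff x.2 = 0
    · simp [hHx]
    have hb : b * x.1 + b * x.2 = b * i₀ + b * j₀ := by rw [← mul_add, ← mul_add, hx]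
    have hwt : a * (padicValInt q (G.coeff i₀) + padicValInt q (H.coeff j₀)) <
        a * (padicValInt q (G.coeff x.1) + padicValInt q (H.coeff x.2)) := by
      have hG₁ := weightedVal_le (q := q) (a := a) (b := b) hGx
      have hH₁ := weightedVal_le (q := q) (a := a) (b := b) hHx
      rw [mul_add, mul_add]
      by_cases h : x.1 < i₀
      · linarith [hltG x.1 h hGx]
      · have h₂ : x.2 < j₀ := by
          by_contra h₂
          exact hne (Prod.ext (by omega) (by omega))
        linarith [hltH x.2 h₂ hHx]
    rw [hvlead]
    calc (q : ℤ) ^ (padicValInt q (G.coeff i₀) + padicValInt q (H.coeff j₀) + 1)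
        ∣ (q : ℤ) ^ (padicValInt q (G.coeff x.1) + padicValInt q (H.coeff x.2)) :=
          pow_dvd_pow _ (lt_of_mul_lt_mul_left hwt (Nat.zero_le a))
      _ ∣ G.coeff x.1 * H.coeff x.2 := by
          rw [pow_add]; exact mul_dvd_mul (padicValInt_dvd _) (padicValInt_dvd _)
  have hcoeff : (G * H).coeff (i₀ + j₀) = G.coeff i₀ * H.coeff j₀ +
      ∑ x ∈ (antidiagonal (i₀ + j₀)).erase (i₀, j₀), G.coeff x.1 * H.coeff x.2 := by
    have hmem : (i₀, j₀) ∈ antidiagonal (i₀ + j₀) :=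
      HasAntidiagonal.mem_antidiagonal.2 rfl
    rw [coeff_mul, ← Finset.add_sum_erase _ _ hmem]
  obtain ⟨hne, hv⟩ := padicValInt_add_of_pow_succ_dvd hq.ne_one hlead hrest
  rw [← hcoeff] at hne hv
  calc weightedVal q a b (G * H)
      ≤ a * padicValInt q ((G * H).coeff (i₀ + j₀)) + b * (i₀ + j₀) := weightedVal_le hne
    _ = weightedVal q a b G + weightedVal q a b H := by rw [hv, hvlead, ← hwG, ← hwH]; ring

end WeightedValuation

/-- The Newton polygon of `F` at `q` is the single segment from `(0, v_q(F 0))` to `(deg F, 0)`: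
no point `(i, v_q(F i))` lies below it. -/
def IsPureAt (q : ℕ) (F : ℤ[X]) : Prop :=
  ∀ i, F.coeff i ≠ 0 → F.natDegree * padicValInt q (F.coeff 0) ≤
    F.natDegree * padicValInt q (F.coeff i) + padicValInt q (F.coeff 0) * i

theorem IsPureAt.natDegree_mul_padicValInt_eq_of_dvd {q : ℕ} (hq : q.Prime) {F G : ℤ[X]}
    (hpure : IsPureAt q F) (hF : F.Monic) (hF0 : F.coeff 0 ≠ 0) (hG : G.Monic) (hGF : G ∣ F) :
    F.natDegree * padicValInt q (G.coeff 0) = padicValInt q (F.coeff 0) * G.natDegree := by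
  have : Fact q.Prime := ⟨hq⟩
  obtain ⟨H, rfl⟩ := hGF
  have hH : H.Monic := hG.of_mul_monic_left hF
  set n := (G * H).natDegree
  set M := padicValInt q ((G * H).coeff 0)
  rw [mul_coeff_zero] at hF0
  have hG0 : G.coeff 0 ≠ 0 := left_ne_zero_of_mul hF0
  have hH0 : H.coeff 0 ≠ 0 := right_ne_zero_of_mul hF0
  have hM : n * padicValInt q (G.coeff 0) + n * padicValInt q (H.coeff 0) = n * M := by
    rw [← mul_add, ← padicValInt.mul hG0 hH0, ← mul_coeff_zero]
  have hn : M * G.natDegree + M * H.natDegree = n * M := by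
    rw [← mul_add, ← hG.natDegree_mul hH, mul_comm]
  -- `(0, v_q(G 0))` and `(deg G, 0)` bound the weight of `G` along the slope of `F`, and the two
  -- factors together must reach the weight `n M` of `F`.
  have hFw : n * M ≤ weightedVal q n M (G * H) := le_weightedVal hF.ne_zero hpure
  have hGH := weightedVal_mul_le (a := n) (b := M) hq hG.ne_zero hH.ne_zero
  have hG₀ := weightedVal_le (q := q) (a := n) (b := M) hG0
  have hH₀ := weightedVal_le (q := q) (a := n) (b := M) hH0
  have hGlead := weightedVal_le (q := q) (a := n) (b := M) (hG.coeff_natDegree ▸ one_ne_zero)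
  have hHlead := weightedVal_le (q := q) (a := n) (b := M) (hH.coeff_natDegree ▸ one_ne_zero)
  simp only [hG.coeff_natDegree, hH.coeff_natDegree, padicValInt.one, mul_zero, zero_add,
    add_zero] at hG₀ hH₀ hGlead hHlead
  linarith

theorem Monic.irreducible_of_isPureAt {F : ℤ[X]} (hF : F.Monic) (hdeg : F.natDegree ≠ 0)
    (h : ∀ p, p.Prime → p ∣ F.natDegree →
      ∃ q, q.Prime ∧ IsPureAt q F ∧ ¬ p ∣ padicValInt q (F.coeff 0)) :
    Irreducible F := by
  refine hF.irreducible_iff_natDegree.2 ⟨fun h1 => hdeg (by simp [h1]), fun G H hG hH hGH => ?_⟩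
  have hsum : G.natDegree + H.natDegree = F.natDegree := by rw [← hGH, hG.natDegree_mul hH]
  suffices F.natDegree ∣ G.natDegree by
    rcases Nat.eq_zero_or_pos G.natDegree with h0 | h0
    · exact Or.inl h0
    · exact Or.inr (by have := Nat.le_of_dvd h0 this; omega)
  rcases eq_or_ne G.natDegree 0 with h0 | h0
  · simp [h0]
  refine (Nat.factorization_prime_le_iff_dvd hdeg h0).1 fun p hp => ?_
  by_cases hpn : p ∣ F.natDegree
  · obtain ⟨q, hq, hpure, hpv⟩ := h p hp hpn
    have hF0 : F.coeff 0 ≠ 0 := fun h0 => hpv (by simp [h0])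
    have hslope := hpure.natDegree_mul_padicValInt_eq_of_dvd hq hF hF0 hG ⟨H, hGH.symm⟩
    rw [← hp.pow_dvd_iff_le_factorization h0]
    refine (Nat.Coprime.pow_left _ (hp.coprime_iff_not_dvd.2 hpv)).dvd_of_dvd_mul_left ?_
    exact (Nat.ordProj_dvd _ p).trans ⟨_, hslope.symm⟩
  · simp [Nat.factorization_eq_zero_of_not_dvd hpn]

end Polynomial

theorem div_sub_mul_choose_eq {n k : ℕ} (h : 2 * k < n) :
    (n : ℚ) / (n - k) * (n - k).choose k = 2 * (n - k).choose k - (n - k - 1).choose k := by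
  obtain ⟨a, ha⟩ : ∃ a, n - k = a + 1 := ⟨n - k - 1, by omega⟩
  have hn : (n : ℚ) = a + 1 + k := by exact_mod_cast (by omega : n = a + 1 + k)
  have hchoose : (a.choose k : ℚ) * (a + 1) = (a + 1).choose k * (a + 1 - k) := by
    have := Nat.choose_mul_succ_eq a k
    rw [← Nat.cast_inj (R := ℚ)] at this
    push_cast [Nat.cast_sub (by omega : k ≤ a + 1)] at this
    exact this
  rw [ha, Nat.add_sub_cancel, hn]
  field_simp
  linear_combination hchoose

namespace DeMoivre

def coeffInt (m k : ℕ) : ℤ :=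
  (-1) ^ k * (2 * ((2 * m + 1 - k).choose k : ℤ) - ((2 * m - k).choose k : ℤ))

noncomputable def intPoly (m : ℕ) (d D : ℤ) : ℤ[X] :=
  (∑ k ∈ Finset.range (m + 1), C (coeffInt m k * D ^ k) * X ^ (2 * m + 1 - 2 * k))
    - C (d * D ^ m)

theorem map_intPoly (m : ℕ) (d R : ℤ) :
    (intPoly m d (d ^ 2 - R)).map (Int.castRingHom ℚ) = deMoivre (2 * m + 1) d R := by
  rw [intPoly, deMoivre, show (2 * m + 1 - 1) / 2 = m by omega, Polynomial.map_sub,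
    Polynomial.map_sum, map_C]
  congr 1
  · refine Finset.sum_congr rfl fun k hk => ?_
    have hk : 2 * k < 2 * m + 1 := by rw [Finset.mem_range] at hk; omega
    rw [Polynomial.map_mul, map_C, Polynomial.map_pow, map_X, mul_assoc ((-1 : ℚ) ^ k),
      div_sub_mul_choose_eq hk, show 2 * m + 1 - k - 1 = 2 * m - k by omega, coeffInt]
    simp
  · simp

variable {m : ℕ} {d D : ℤ}

theorem coeff_intPoly (i : ℕ) :
    (intPoly m d D).coeff i =
      (∑ k ∈ Finset.range (m + 1), if i = 2 * m + 1 - 2 * k then coeffInt m k * D ^ k else 0)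
        - if i = 0 then d * D ^ m else 0 := by
  simp only [intPoly, coeff_sub, finsetSum_coeff, coeff_C_mul, coeff_X_pow, coeff_C, mul_ite,
    mul_one, mul_zero]

theorem coeff_intPoly_two_mul_add_one {j : ℕ} (hj : j ≤ m) :
    (intPoly m d D).coeff (2 * j + 1) = coeffInt m (m - j) * D ^ (m - j) := by
  rw [coeff_intPoly, if_neg (by omega), sub_zero,
    Finset.sum_eq_single (m - j) (fun k hk hkj => if_neg (by rw [Finset.mem_range] at hk; omega))
      (fun h => absurd (Finset.mem_range.2 (by omega)) h), if_pos (by omega)]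

theorem coeff_intPoly_eq_zero {i : ℕ} (hi₀ : i ≠ 0) (hi : ∀ j ≤ m, i ≠ 2 * j + 1) :
    (intPoly m d D).coeff i = 0 := by
  rw [coeff_intPoly, if_neg hi₀, sub_zero]
  refine Finset.sum_eq_zero fun k hk => if_neg fun h => hi (m - k) (by omega) ?_
  rw [Finset.mem_range] at hk
  omega

theorem coeff_zero_intPoly : (intPoly m d D).coeff 0 = -(d * D ^ m) := by
  have hsum : ∑ k ∈ Finset.range (m + 1),
      (if 0 = 2 * m + 1 - 2 * k then coeffInt m k * D ^ k else 0) = 0 :=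
    Finset.sum_eq_zero fun k hk => if_neg (by rw [Finset.mem_range] at hk; omega)
  rw [coeff_intPoly, if_pos rfl, hsum, zero_sub]

theorem natDegree_intPoly_le : (intPoly m d D).natDegree ≤ 2 * m + 1 :=
  natDegree_le_iff_coeff_eq_zero.2 fun i hi => coeff_intPoly_eq_zero (by omega) (by omega)

theorem coeff_intPoly_leading : (intPoly m d D).coeff (2 * m + 1) = 1 := by
  simp [coeff_intPoly_two_mul_add_one le_rfl, coeffInt]

theorem monic_intPoly : (intPoly m d D).Monic :=
  monic_of_natDegree_le_of_coeff_eq_one _ natDegree_intPoly_le coeff_intPoly_leading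

theorem natDegree_intPoly : (intPoly m d D).natDegree = 2 * m + 1 :=
  natDegree_eq_of_le_of_coeff_ne_zero natDegree_intPoly_le (by simp [coeff_intPoly_leading])

theorem padicValInt_coeff_zero_intPoly {q : ℕ} (hq : q.Prime) (hqd : ¬ (q : ℤ) ∣ d)
    (hD : D ≠ 0) : padicValInt q ((intPoly m d D).coeff 0) = m * padicValInt q D := by
  have : Fact q.Prime := ⟨hq⟩
  have hd : d ≠ 0 := fun h => hqd (h ▸ dvd_zero _)
  rw [coeff_zero_intPoly, padicValInt, Int.natAbs_neg, ← padicValInt,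
    padicValInt.mul hd (pow_ne_zero _ hD), padicValInt.eq_zero_of_not_dvd hqd, zero_add,
    padicValInt, Int.natAbs_pow, padicValNat.pow, padicValInt]

theorem isPureAt_intPoly {q : ℕ} (hq : q.Prime) (hqd : ¬ (q : ℤ) ∣ d) (hD : D ≠ 0) :
    IsPureAt q (intPoly m d D) := by
  have : Fact q.Prime := ⟨hq⟩
  intro i hi
  rw [natDegree_intPoly, padicValInt_coeff_zero_intPoly hq hqd hD]
  rcases eq_or_ne i 0 with rfl | hi₀
  · rw [padicValInt_coeff_zero_intPoly hq hqd hD]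
    omega
  obtain ⟨j, hj, rfl⟩ : ∃ j ≤ m, i = 2 * j + 1 := by
    by_contra! h
    exact hi (coeff_intPoly_eq_zero hi₀ h)
  have hval : (m - j) * padicValInt q D ≤ padicValInt q ((intPoly m d D).coeff (2 * j + 1)) := by
    refine ((padicValInt_dvd_iff _ _).1 ?_).resolve_left hi
    rw [coeff_intPoly_two_mul_add_one hj, mul_comm, pow_mul]
    exact (pow_dvd_pow_of_dvd (padicValInt_dvd D) _).mul_left _
  obtain ⟨t, rfl⟩ : ∃ t, m = j + t := ⟨m - j, by omega⟩
  rw [Nat.add_sub_cancel_left] at hval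
  nlinarith

end DeMoivre

theorem Int.not_dvd_of_dvd_sq_sub {q : ℕ} (hq : q.Prime) {d R : ℤ} (hgcd : Int.gcd d R = 1)
    (h : (q : ℤ) ∣ d ^ 2 - R) : ¬ (q : ℤ) ∣ d := fun hd => by
  have hR : (q : ℤ) ∣ R := by
    simpa using dvd_sub (dvd_pow hd two_ne_zero) h
  have := Int.dvd_coe_gcd hd hR
  rw [hgcd, Nat.cast_one, Int.natCast_dvd_ofNat, Nat.dvd_one] at this
  exact hq.ne_one this

open DeMoivre in
theorem deMoivre_irreducible_of_valuation_general
    (n : ℕ) (hodd : Odd n)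
    (d R : ℤ)
    (hgcd : Int.gcd d R = 1)
    (D : ℤ) (hD : D = d ^ 2 - R)
    (hval : ∀ p : ℕ, p.Prime → p ∣ n →
      ∃ q : ℕ, q.Prime ∧ 3 ≤ q ∧ Odd (padicValInt q D) ∧ ¬ p ∣ padicValInt q D) :
    Irreducible (deMoivre n (d : ℚ) (R : ℚ)) := by
  obtain ⟨m, rfl⟩ := hodd
  rw [← map_intPoly, ← hD]
  refine (IsPrimitive.Int.irreducible_iff_irreducible_map_cast monic_intPoly.isPrimitive).1 ?_
  refine monic_intPoly.irreducible_of_isPureAt (by simp [natDegree_intPoly]) fun p hp hpn => ?_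
  rw [natDegree_intPoly] at hpn
  obtain ⟨q, hq, -, hvodd, hpv⟩ := hval p hp hpn
  have : Fact q.Prime := ⟨hq⟩
  have hv : padicValInt q D ≠ 0 := fun h => by simp [h] at hvodd
  have hD0 : D ≠ 0 := fun h => hv (by simp [h])
  have hqd : ¬ (q : ℤ) ∣ d := Int.not_dvd_of_dvd_sq_sub hq hgcd (hD ▸ by
    simpa using (padicValInt_dvd_iff 1 D).2 (Or.inr (Nat.one_le_iff_ne_zero.2 hv)))
  have hpm : ¬ p ∣ m := fun h =>
    hp.one_lt.ne' (Nat.dvd_one.1 ((Nat.dvd_add_right (dvd_mul_of_dvd_right h 2)).1 hpn))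
  refine ⟨q, hq, isPureAt_intPoly hq hqd hD0, ?_⟩
  rw [padicValInt_coeff_zero_intPoly hq hqd hD0]
  exact fun h => (hp.dvd_mul.1 h).elim hpm hpv

/-- **Proposition 7.**  Let `n ≥ 3` be odd and `d, R` integers with `R` not a perfect square,
`gcd(d, R) = 1` and `D = d² - R`.  If for each prime `p` dividing `n` there is a prime
`q ≥ 3` such that the `q`-adic valuation `v_q(D)` is odd and not divisible by `p`, then
`f_n = f_n(Z,d,R)` is irreducible in `ℚ[Z]`. -/
theorem deMoivre_irreducible_of_valuation
    (n : ℕ) (hn3 : 3 ≤ n) (hodd : Odd n)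
    (d R : ℤ) (hd : d ≠ 0) (hR : ¬ IsSquare R)
    (hgcd : Int.gcd d R = 1)
    (D : ℤ) (hD : D = d ^ 2 - R)
    (hval : ∀ p : ℕ, p.Prime → p ∣ n →
      ∃ q : ℕ, q.Prime ∧ 3 ≤ q ∧ Odd (padicValInt q D) ∧ ¬ p ∣ padicValInt q D) :
    Irreducible (deMoivre n (d : ℚ) (R : ℚ)) :=
  deMoivre_irreducible_of_valuation_general n hodd d R hgcd D hD hval
end
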